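/- For n ≥ k ≥ 1, the sum of q^{2̲13(σ)} over 1̲32-avoiding permutations σ of [n] with exactly k−1 descents equals S̃_q(n,k), where 2̲13(σ) counts triples of positions i < j < j+1 with σ_j < σ_i < σ_{j+1}. -/

import Mathlib

open Finset

variable {n : ℕ}

/-- The word (in one-line notation, with letters `1,...,n`) of a permutation of `[n]`. -/
def pw (p : Equiv.Perm (Fin n)) : Fin n → ℕ := fun i => (p i : ℕ) + 1

/-- Descent number of a word: positions `i` with `w_i > w_{i+1}`. -/
def desW (w : Fin n → ℕ) : ℕ :=
  (Finset.univ.filter fun i : Fin n => ∃ j : Fin n, (j : ℕ) = (i : ℕ) + 1 ∧ w j < w i).card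

/-- Major index of a word: the sum of the (1-indexed) descent positions. -/
def majW (w : Fin n → ℕ) : ℕ :=
  ∑ i ∈ Finset.univ.filter
      (fun i : Fin n => ∃ j : Fin n, (j : ℕ) = (i : ℕ) + 1 ∧ w j < w i), ((i : ℕ) + 1)

/-- Occurrences of the vincular pattern 2-31: `i < j` with `w_{j+1} < w_i < w_j`. -/
def pat2_31 (w : Fin n → ℕ) : ℕ :=
  ((Finset.univ ×ˢ Finset.univ).filter fun q : Fin n × Fin n =>
    q.1 < q.2 ∧ ∃ j' : Fin n, (j' : ℕ) = (q.2 : ℕ) + 1 ∧ w j' < w q.1 ∧ w q.1 < w q.2).card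

/-- Occurrences of the vincular pattern 2-13: `i < j` with `w_j < w_i < w_{j+1}`. -/
def pat2_13 (w : Fin n → ℕ) : ℕ :=
  ((Finset.univ ×ˢ Finset.univ).filter fun q : Fin n × Fin n =>
    q.1 < q.2 ∧ ∃ j' : Fin n, (j' : ℕ) = (q.2 : ℕ) + 1 ∧ w q.2 < w q.1 ∧ w q.1 < w j').card

/-- Occurrences of the vincular pattern 1-32: `i < j` with `w_i < w_{j+1} < w_j`. -/
def pat1_32 (w : Fin n → ℕ) : ℕ :=
  ((Finset.univ ×ˢ Finset.univ).filter fun q : Fin n × Fin n =>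
    q.1 < q.2 ∧ ∃ j' : Fin n, (j' : ℕ) = (q.2 : ℕ) + 1 ∧ w q.1 < w j' ∧ w j' < w q.2).card

/-- Occurrences of the vincular pattern 3-21: `i < j` with `w_{j+1} < w_j < w_i`. -/
def pat3_21 (w : Fin n → ℕ) : ℕ :=
  ((Finset.univ ×ˢ Finset.univ).filter fun q : Fin n × Fin n =>
    q.1 < q.2 ∧ ∃ j' : Fin n, (j' : ℕ) = (q.2 : ℕ) + 1 ∧ w j' < w q.2 ∧ w q.2 < w q.1).card

/-- The Babson–Steingrímsson statistic BAST = (21) + (2-13) + (1-32) + (3-21). -/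
def BAST (w : Fin n → ℕ) : ℕ := desW w + pat2_13 w + pat1_32 w + pat3_21 w

/-- `w` avoids the vincular pattern 1-32: there is no `i < j` with `w_i < w_{j+1} < w_j`. -/
def Avoids132 (w : Fin n → ℕ) : Prop :=
  ∀ i j j' : Fin n, i < j → (j' : ℕ) = (j : ℕ) + 1 → ¬(w i < w j' ∧ w j' < w j)

open Polynomial in
/-- The q-integer [k]_q. -/
noncomputable def qint (k : ℕ) : Polynomial ℚ := ∑ i ∈ Finset.range k, X ^ i

/-- The q-Stirling number S̃_q(n,k). -/
noncomputable def Sqt : ℕ → ℕ → Polynomial ℚ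
  | 0, 0 => 1
  | 0, _ + 1 => 0
  | _ + 1, 0 => 0
  | n + 1, k + 1 => Sqt n k + qint (k + 1) * Sqt n (k + 1)


/-!
A 1-32-avoiding permutation has the form `σ' 1 τ` with `τ` increasing, since a descent inside
`1 τ` would complete a 1-32 with the letter `1`. Let `B ∋ 1` be the set of letters of `1 τ`.
Standardising `σ'` gives a 1-32-avoider with one descent fewer, and each 2-13 occurrence of the
permutation either lies inside `σ'` or consists of a letter `c ∉ B` of `σ'` followed by the two
consecutive letters of `B` around `c`; there is exactly one such occurrence for each `c < max B`, so
these contribute `q ^ (max B - |B|)`. Conversely every `B ∋ 1` and every avoider on the complement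
glue together. Hence the generating function `F(n, d)` of avoiders with `d` descents satisfies
`F(n, d + 1) = ∑_{1 ∈ B, |B| < n} q ^ (max B - |B|) F(n - |B|, d)`, while
`S̃_q(n, d + 2) = ∑_{1 ∈ B} q ^ (max B - |B|) S̃_q(n - |B|, d + 1)` follows by induction on `n`,
splitting the sum according to whether `n ∈ B`.
-/

open Polynomial Equiv

lemma Sqt_zero_left (k : ℕ) : Sqt 0 k = if k = 0 then 1 else 0 := by
  cases k <;> rfl

lemma Sqt_succ_zero (m : ℕ) : Sqt (m + 1) 0 = 0 := rfl

lemma Sqt_succ_succ (m k : ℕ) : Sqt (m + 1) (k + 1) = Sqt m k + qint (k + 1) * Sqt m (k + 1) :=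
  rfl

lemma Sqt_eq_zero_of_lt {m k : ℕ} (h : m < k) : Sqt m k = 0 := by
  induction m generalizing k with
  | zero => simp [Sqt_zero_left, h.ne']
  | succ m ih =>
    obtain ⟨k, rfl⟩ := Nat.exists_eq_add_of_lt (Nat.zero_lt_of_lt h)
    rw [zero_add, Sqt_succ_succ, ih (by omega), ih (by omega), mul_zero, add_zero]

lemma Sqt_succ_one (m : ℕ) : Sqt (m + 1) 1 = 1 := by
  induction m with
  | zero => simp [Sqt_succ_succ, Sqt_zero_left]
  | succ m ih => rw [Sqt_succ_succ, Sqt_succ_zero, ih]; simp [qint]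

lemma qint_succ (k : ℕ) : qint (k + 1) = qint k + X ^ k := by
  simp [qint, Finset.sum_range_succ]

lemma qint_succ' (k : ℕ) : qint (k + 1) = 1 + X * qint k := by
  simp [qint, Finset.sum_range_succ', Finset.mul_sum, pow_succ, mul_comm, add_comm]

lemma card_le_of_mem_powerset_range {m : ℕ} {C : Finset ℕ} (hC : C ∈ (range m).powerset) :
    #C ≤ m :=
  (card_le_card (mem_powerset.mp hC)).trans_eq (card_range m)

lemma card_insert_of_mem_powerset_range {m : ℕ} {C : Finset ℕ} (hC : C ∈ (range m).powerset) :
    #(insert m C) = #C + 1 :=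
  card_insert_of_notMem fun h => notMem_range_self (mem_powerset.mp hC h)

lemma sum_powerset_range_pow_mul_Sqt (m k : ℕ) :
    ∑ C ∈ (range m).powerset, X ^ (m - #C) * Sqt (m - #C) k = X ^ k * Sqt (m + 1) (k + 1) := by
  induction m generalizing k with
  | zero => cases k <;> simp [Sqt_succ_succ, Sqt_zero_left]
  | succ m ih =>
    rw [range_add_one, sum_powerset_insert notMem_range_self]
    have hins : ∑ C ∈ (range m).powerset, X ^ (m + 1 - #(insert m C)) *
        Sqt (m + 1 - #(insert m C)) k = X ^ k * Sqt (m + 1) (k + 1) := by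
      rw [← ih]
      refine sum_congr rfl fun C hC => ?_
      rw [card_insert_of_mem_powerset_range hC, Nat.add_sub_add_right]
    have hshift : ∀ C ∈ (range m).powerset, m + 1 - #C = m - #C + 1 := fun C hC =>
      Nat.sub_add_comm (card_le_of_mem_powerset_range hC)
    rw [hins, sum_congr rfl fun C hC => by rw [hshift C hC]]
    cases k with
    | zero => simp [Sqt_succ_zero, Sqt_succ_one]
    | succ k =>
      have hsplit : ∀ j : ℕ, X ^ (j + 1) * Sqt (j + 1) (k + 1) =
          X * (X ^ j * Sqt j k) + X * qint (k + 1) * (X ^ j * Sqt j (k + 1)) := fun j => by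
        rw [Sqt_succ_succ]; ring
      simp only [hsplit, sum_add_distrib, ← mul_sum, ih, Sqt_succ_succ (m + 1),
        qint_succ' (k + 1)]
      ring

lemma sum_powerset_range_pow_sup_mul_Sqt (m k : ℕ) :
    ∑ C ∈ (range m).powerset, X ^ (C.sup (· + 1) - #C) * Sqt (m - #C) k =
      Sqt (m + 1) (k + 1) := by
  induction m generalizing k with
  | zero => cases k <;> simp [Sqt_succ_succ, Sqt_zero_left]
  | succ m ih =>
    rw [range_add_one, sum_powerset_insert notMem_range_self]
    have hins : ∑ C ∈ (range m).powerset, X ^ ((insert m C).sup (· + 1) - #(insert m C)) *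
        Sqt (m + 1 - #(insert m C)) k = X ^ k * Sqt (m + 1) (k + 1) := by
      rw [← sum_powerset_range_pow_mul_Sqt]
      refine sum_congr rfl fun C hC => ?_
      have hsup : (insert m C).sup (· + 1) = m + 1 :=
        le_antisymm (Finset.sup_le fun x hx => by
          rcases mem_insert.mp hx with rfl | hx
          · rfl
          · exact Nat.succ_le_succ (mem_range.mp (mem_powerset.mp hC hx)).le)
          (le_sup (f := (· + 1)) (mem_insert_self m C))
      rw [card_insert_of_mem_powerset_range hC, hsup, Nat.add_sub_add_right]
    have hshift : ∀ C ∈ (range m).powerset, m + 1 - #C = m - #C + 1 := fun C hC =>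
      Nat.sub_add_comm (card_le_of_mem_powerset_range hC)
    rw [hins, sum_congr rfl fun C hC => by rw [hshift C hC]]
    cases k with
    | zero => simp [Sqt_succ_zero, Sqt_succ_one]
    | succ k =>
      simp only [Sqt_succ_succ _ k, mul_add, sum_add_distrib, mul_left_comm _ (qint (k + 1)),
        ← mul_sum, ih, Sqt_succ_succ (m + 1), qint_succ (k + 1)]
      ring

lemma sum_powerset_image {α β M : Type*} [DecidableEq β] [AddCommMonoid M] {f : α → β}
    (hf : Function.Injective f) (s : Finset α) (g : Finset β → M) :
    ∑ D ∈ (s.image f).powerset, g D = ∑ t ∈ s.powerset, g (t.image f) := by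
  rw [powerset_image, sum_image fun t _ u _ h => image_injective hf h]

lemma sum_filter_zero_mem_eq_sum_powerset_range {M : Type*} [AddCommMonoid M] (m : ℕ)
    (f : Finset ℕ → M) :
    ∑ B : Finset (Fin (m + 1)) with 0 ∈ B, f (B.image Fin.val) =
      ∑ C ∈ (range m).powerset, f (insert 0 (C.image (· + 1))) := by
  have hrange : range (m + 1) = insert 0 ((range m).image (· + 1)) := by
    ext (_ | x) <;> simp
  have hsucc : (0 : ℕ) ∉ (range m).image (· + 1) := by simp
  let g : Finset ℕ → M := fun D => if 0 ∈ D then f D else 0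
  calc ∑ B : Finset (Fin (m + 1)) with 0 ∈ B, f (B.image Fin.val)
      = ∑ B ∈ (univ : Finset (Fin (m + 1))).powerset, g (B.image Fin.val) := by
        simp [g, sum_filter]
    _ = ∑ D ∈ (insert 0 ((range m).image (· + 1))).powerset, g D := by
        rw [← sum_powerset_image Fin.val_injective, image_fin_univ, hrange]
    _ = _ := by
        rw [sum_powerset_insert hsucc,
          sum_eq_zero fun t ht => if_neg (notMem_of_mem_powerset_of_notMem ht hsucc), zero_add,
          sum_powerset_image (add_left_injective 1)]
        simp [g]

lemma sum_zero_mem_pow_sup_mul_Sqt (m j : ℕ) :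
    ∑ B : Finset (Fin (m + 1)) with 0 ∈ B, X ^ (B.sup Fin.val + 1 - #B) * Sqt (m + 1 - #B) j =
      Sqt (m + 1) (j + 1) := by
  let f (D : Finset ℕ) := X ^ (D.sup id + 1 - #D) * Sqt (m + 1 - #D) j
  calc _ = ∑ B : Finset (Fin (m + 1)) with 0 ∈ B, f (B.image Fin.val) :=
        sum_congr rfl fun B _ => by
          simp only [f, sup_image, card_image_of_injective _ Fin.val_injective]
          rfl
    _ = ∑ C ∈ (range m).powerset, f (insert 0 (C.image (· + 1))) :=
        sum_filter_zero_mem_eq_sum_powerset_range m f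
    _ = _ := by
        rw [← sum_powerset_range_pow_sup_mul_Sqt]
        refine sum_congr rfl fun C _ => ?_
        have hsucc : (0 : ℕ) ∉ C.image (· + 1) := by simp
        simp only [f, card_insert_of_notMem hsucc, card_image_of_injective _ (add_left_injective 1),
          sup_insert, sup_image, Function.id_comp, id_eq, zero_max]
        congr 2 <;> omega

lemma pw_lt_pw_iff (p : Perm (Fin n)) (i j : Fin n) : pw p i < pw p j ↔ p i < p j := by
  simp [pw]

def descents (w : Fin n → ℕ) : Finset (Fin n) :=
  {i | ∃ j : Fin n, (j : ℕ) = i + 1 ∧ w j < w i}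

lemma mem_descents {w : Fin n → ℕ} {i : Fin n} :
    i ∈ descents w ↔ ∃ j : Fin n, (j : ℕ) = i + 1 ∧ w j < w i := by
  simp [descents]

lemma desW_eq_card_descents (w : Fin n → ℕ) : desW w = #(descents w) := rfl

def occ213 (w : Fin n → ℕ) : Finset (Fin n × Fin n) :=
  {q | q.1 < q.2 ∧ ∃ j' : Fin n, (j' : ℕ) = q.2 + 1 ∧ w q.2 < w q.1 ∧ w q.1 < w j'}

lemma mem_occ213 {w : Fin n → ℕ} {q : Fin n × Fin n} :
    q ∈ occ213 w ↔
      q.1 < q.2 ∧ ∃ j' : Fin n, (j' : ℕ) = q.2 + 1 ∧ w q.2 < w q.1 ∧ w q.1 < w j' := by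
  simp [occ213]

lemma pat2_13_eq_card_occ213 (w : Fin n → ℕ) : pat2_13 w = #(occ213 w) := by
  simp [pat2_13, occ213]

lemma card_compl_fin (B : Finset (Fin n)) : #Bᶜ = n - #B := by
  simp [card_compl]

lemma Fin.lt_of_lt_of_forall_lt_next {α : Type*} [Preorder α] {f : Fin n → α} {a : ℕ}
    (hf : ∀ i j : Fin n, a ≤ i → (j : ℕ) = i + 1 → f i < f j) {i j : Fin n} (hi : a ≤ i)
    (hij : i < j) : f i < f j := by
  obtain ⟨d, hd⟩ : ∃ d, (j : ℕ) = i + d + 1 := ⟨j - i - 1, by omega⟩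
  induction d generalizing j with
  | zero => exact hf i j hi hd
  | succ d ih =>
    have hk : (i : ℕ) + d + 1 < n := by omega
    exact (ih (j := ⟨_, hk⟩) (Fin.mk_lt_mk.mpr (by omega)) rfl).trans
      (hf _ j (by simp only; omega) (by simp only; omega))

lemma eq_one_of_desW_eq_zero {p : Perm (Fin n)} (h : desW (pw p) = 0) : p = 1 := by
  rw [desW, card_eq_zero, filter_eq_empty_iff] at h
  have hstep (i j : Fin n) (_ : 0 ≤ (i : ℕ)) (hj : (j : ℕ) = i + 1) : p i < p j :=
    (p.injective.ne (Fin.ne_of_val_ne (by omega))).lt_or_gt.resolve_right fun hji =>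
      h (mem_univ i) ⟨j, hj, (pw_lt_pw_iff p j i).mpr hji⟩
  have hmono : StrictMono p := fun i j => Fin.lt_of_lt_of_forall_lt_next hstep (Nat.zero_le _)
  exact Equiv.ext fun i => hmono.apply_eq

lemma desW_pw_one : desW (pw (1 : Perm (Fin n))) = 0 := by
  simp only [desW, card_eq_zero, filter_eq_empty_iff]
  rintro i - ⟨j, hj, hji⟩
  simp only [pw, Perm.one_apply] at hji
  omega

lemma avoids132_pw_one : Avoids132 (pw (1 : Perm (Fin n))) := by
  rintro i j j' hij hj ⟨-, h⟩
  simp only [pw, Perm.one_apply] at h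
  omega

lemma pat2_13_pw_one : pat2_13 (pw (1 : Perm (Fin n))) = 0 := by
  simp only [pat2_13, card_eq_zero, filter_eq_empty_iff]
  rintro ⟨i, j⟩ - ⟨hij, j', hj, h, -⟩
  simp only [pw, Perm.one_apply, Fin.lt_def] at hij h
  omega

lemma card_compl_filter_lt_max' (B : Finset (Fin n)) (H : B.Nonempty) :
    #{c ∈ Bᶜ | c < B.max' H} = B.sup Fin.val + 1 - #B := by
  have hsplit := card_filter_add_card_filter_not (s := Iio (B.max' H)) (· ∈ B)
  have hB : {x ∈ Iio (B.max' H) | x ∈ B} = B.erase (B.max' H) := by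
    ext x
    simp only [mem_filter, mem_Iio, mem_erase]
    exact ⟨fun h => ⟨h.1.ne, h.2⟩, fun h => ⟨lt_of_le_of_ne (le_max' B x h.2) h.1, h.2⟩⟩
  have hBc : {x ∈ Iio (B.max' H) | x ∉ B} = {c ∈ Bᶜ | c < B.max' H} := by
    ext x
    simp [and_comm]
  have hmax : (B.max' H : ℕ) = B.sup Fin.val :=
    le_antisymm (le_sup (f := Fin.val) (max'_mem B H)) (Finset.sup_le fun x hx => le_max' B x hx)
  rw [hB, hBc, card_erase_of_mem (max'_mem B H), Fin.card_Iio, hmax] at hsplit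
  have := card_pos.mpr H
  omega

lemma orderEmbOfFin_compl_ne (B : Finset (Fin n)) {k : ℕ} (h : #Bᶜ = k) (i : Fin k)
    (j : Fin #B) :
    Bᶜ.orderEmbOfFin h i ≠ B.orderEmbOfFin rfl j := fun hij =>
  mem_compl.mp (hij ▸ Bᶜ.orderEmbOfFin_mem h i) (B.orderEmbOfFin_mem rfl j)

section Avoiders

variable [NeZero n]

-- Letters are `0`-based: these are the letters from the letter `1` (the value `0`) onwards.
def minSuffix (p : Perm (Fin n)) : Finset (Fin n) := {v | p.symm 0 ≤ p.symm v}

lemma Avoids132.lt_of_symm_zero_le {p : Perm (Fin n)} (hA : Avoids132 (pw p)) {i j : Fin n}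
    (hi : p.symm 0 ≤ i) (hj : (j : ℕ) = i + 1) : p i < p j := by
  have hne : p i ≠ p j := p.injective.ne (Fin.ne_of_val_ne (by omega))
  refine hne.lt_or_gt.resolve_right fun hji => ?_
  rcases hi.eq_or_lt with rfl | hlt
  · simp at hji
  · refine hA _ i j hlt hj ⟨?_, (pw_lt_pw_iff p j i).mpr hji⟩
    rw [pw_lt_pw_iff, apply_symm_apply, Fin.pos_iff_ne_zero, ne_eq, ← eq_symm_apply]
    exact Fin.ne_of_val_ne (by have := Fin.lt_def.mp hlt; omega)

lemma Avoids132.lt_of_symm_zero_le_of_lt {p : Perm (Fin n)} (hA : Avoids132 (pw p))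
    {i j : Fin n} (hi : p.symm 0 ≤ i) (hij : i < j) : p i < p j :=
  Fin.lt_of_lt_of_forall_lt_next (a := p.symm 0) (fun _ _ hi hj => hA.lt_of_symm_zero_le hi hj)
    hi hij

lemma Avoids132.eq_one_of_symm_zero_eq_zero {p : Perm (Fin n)} (hA : Avoids132 (pw p))
    (h : p.symm 0 = 0) : p = 1 :=
  Equiv.ext fun _ => StrictMono.apply_eq fun _ _ =>
    hA.lt_of_symm_zero_le_of_lt (by rw [h]; exact Fin.zero_le _)

lemma card_minSuffix (p : Perm (Fin n)) : #(minSuffix p) = n - p.symm 0 := by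
  have : minSuffix p = (Ici (p.symm 0)).map p.toEmbedding := by
    ext v
    simp [minSuffix]
  rw [this, card_map, Fin.card_Ici]

end Avoiders

section Glue

variable (B : Finset (Fin n))

/-- The letters of `Bᶜ` in the relative order of `p'`, followed by the letters of `B` in
increasing order. -/
noncomputable def glue (p' : Perm (Fin (n - #B))) : Perm (Fin n) :=
  Equiv.ofBijective
    (fun i => if h : (i : ℕ) < n - #B then Bᶜ.orderEmbOfFin (card_compl_fin B) (p' ⟨i, h⟩)
      else B.orderEmbOfFin rfl ⟨i - (n - #B), by have := card_finset_fin_le B; omega⟩)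
    (Finite.injective_iff_bijective.mp fun i j h => by
      have := card_finset_fin_le B
      by_cases hi : (i : ℕ) < n - #B <;> by_cases hj : (j : ℕ) < n - #B <;>
        simp only [hi, hj, dite_true, dite_false] at h
      · simpa [Fin.ext_iff] using h
      · exact absurd h (orderEmbOfFin_compl_ne B _ _ _)
      · exact absurd h.symm (orderEmbOfFin_compl_ne B _ _ _)
      · simp [Fin.ext_iff] at h; omega)

variable {B} {p' : Perm (Fin (n - #B))}

lemma glue_apply_of_lt {i : Fin n} (h : (i : ℕ) < n - #B) :
    glue B p' i = Bᶜ.orderEmbOfFin (card_compl_fin B) (p' ⟨i, h⟩) :=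
  dif_pos h

lemma glue_apply_of_le {i : Fin n} (h : n - #B ≤ i) :
    glue B p' i = B.orderEmbOfFin rfl ⟨i - (n - #B), by have := i.isLt; omega⟩ :=
  dif_neg (not_lt.mpr h)

lemma glue_mem_iff {i : Fin n} : glue B p' i ∈ B ↔ n - #B ≤ i := by
  by_cases h : n - #B ≤ (i : ℕ)
  · simp only [h, glue_apply_of_le h, orderEmbOfFin_mem]
  · simp only [h, iff_false, glue_apply_of_lt (not_le.mp h)]
    exact mem_compl.mp (orderEmbOfFin_mem _ _ _)

lemma glue_lt_glue_iff_of_lt {i j : Fin n} (hi : (i : ℕ) < n - #B) (hj : (j : ℕ) < n - #B) :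
    glue B p' i < glue B p' j ↔ p' ⟨i, hi⟩ < p' ⟨j, hj⟩ := by
  rw [glue_apply_of_lt hi, glue_apply_of_lt hj, OrderEmbedding.lt_iff_lt]

lemma glue_lt_glue_iff_of_le {i j : Fin n} (hi : n - #B ≤ i) (hj : n - #B ≤ j) :
    glue B p' i < glue B p' j ↔ i < j := by
  rw [glue_apply_of_le hi, glue_apply_of_le hj, OrderEmbedding.lt_iff_lt, Fin.mk_lt_mk, Fin.lt_def]
  omega

lemma pw_glue_lt_pw_glue_iff_of_lt {i j : Fin n} (hi : (i : ℕ) < n - #B)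
    (hj : (j : ℕ) < n - #B) :
    pw (glue B p') i < pw (glue B p') j ↔ pw p' ⟨i, hi⟩ < pw p' ⟨j, hj⟩ := by
  rw [pw_lt_pw_iff, pw_lt_pw_iff, glue_lt_glue_iff_of_lt]

lemma glue_injective : Function.Injective (glue (n := n) B) := fun p q h => Equiv.ext fun a => by
  have := DFunLike.congr_fun h ⟨a, Nat.lt_of_lt_of_le a.isLt (Nat.sub_le n #B)⟩
  rwa [glue_apply_of_lt a.isLt, glue_apply_of_lt a.isLt, (orderEmbOfFin _ _).injective.eq_iff]
    at this

lemma glue_le_glue_iff_of_le {i j : Fin n} (hi : n - #B ≤ i) (hj : n - #B ≤ j) :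
    glue B p' i ≤ glue B p' j ↔ i ≤ j := by
  rw [← not_lt, glue_lt_glue_iff_of_le hj hi, not_lt]

lemma card_occ213_glue_of_lt :
    #{q ∈ occ213 (pw (glue B p')) | (q.2 : ℕ) + 1 < n - #B} = #(occ213 (pw p')) := by
  have hle : n - #B ≤ n := Nat.sub_le n #B
  symm
  refine card_nbij (Prod.map (Fin.castLE hle) (Fin.castLE hle)) (fun q hq => ?_)
    (fun a _ b _ h => Prod.ext (Fin.castLE_injective hle (congrArg Prod.fst h))
      (Fin.castLE_injective hle (congrArg Prod.snd h))) (fun q hq => ?_)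
  · obtain ⟨hlt, j', hj', h1, h2⟩ := mem_occ213.mp hq
    simp only [mem_coe, mem_filter, mem_occ213, Prod.map_fst, Prod.map_snd, Fin.val_castLE]
    refine ⟨⟨hlt, j'.castLE hle, hj', ?_, ?_⟩, by omega⟩
    · exact (pw_glue_lt_pw_glue_iff_of_lt q.2.isLt q.1.isLt).mpr h1
    · exact (pw_glue_lt_pw_glue_iff_of_lt q.1.isLt j'.isLt).mpr h2
  · simp only [mem_coe, mem_filter, mem_occ213] at hq
    obtain ⟨⟨hlt, j', hj', h1, h2⟩, hq2⟩ := hq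
    have hq1 : (q.1 : ℕ) < n - #B := by have := Fin.lt_def.mp hlt; omega
    refine ⟨(⟨q.1, hq1⟩, ⟨q.2, by omega⟩),
      mem_occ213.mpr ⟨hlt, ⟨j', by omega⟩, hj', ?_, ?_⟩, rfl⟩
    · exact (pw_glue_lt_pw_glue_iff_of_lt _ _).mp h1
    · exact (pw_glue_lt_pw_glue_iff_of_lt _ _).mp h2

variable [NeZero n]

lemma sub_card_lt_of_zero_mem (h0 : 0 ∈ B) : n - #B < n :=
  Nat.sub_lt (NeZero.pos n) (card_pos.mpr ⟨0, h0⟩)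

lemma glue_apply_sub_card (h0 : 0 ∈ B) :
    glue B p' ⟨n - #B, sub_card_lt_of_zero_mem h0⟩ = 0 := by
  rw [glue_apply_of_le le_rfl]
  simp only [Nat.sub_self, orderEmbOfFin_zero]
  exact le_antisymm (min'_le B 0 h0) (Fin.zero_le _)

lemma symm_glue_zero (h0 : 0 ∈ B) :
    (glue B p').symm 0 = ⟨n - #B, sub_card_lt_of_zero_mem h0⟩ := by
  rw [symm_apply_eq, glue_apply_sub_card h0]

lemma minSuffix_glue (h0 : 0 ∈ B) : minSuffix (glue B p') = B := by
  ext v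
  have := glue_mem_iff (p' := p') (i := (glue B p').symm v)
  rw [apply_symm_apply] at this
  simp [minSuffix, symm_glue_zero h0, Fin.le_def, this]

lemma avoids132_glue_iff (h0 : 0 ∈ B) : Avoids132 (pw (glue B p')) ↔ Avoids132 (pw p') := by
  have hle : n - #B ≤ n := Nat.sub_le n #B
  constructor
  · intro hA i j j' hij hj ⟨h1, h2⟩
    refine hA (i.castLE hle) (j.castLE hle) (j'.castLE hle) hij hj ⟨?_, ?_⟩
    · exact (pw_glue_lt_pw_glue_iff_of_lt i.isLt j'.isLt).mpr h1
    · exact (pw_glue_lt_pw_glue_iff_of_lt j'.isLt j.isLt).mpr h2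
  · intro hA i j j' hij hj ⟨h1, h2⟩
    have hij' := Fin.lt_def.mp hij
    rcases lt_trichotomy (j' : ℕ) (n - #B) with hj' | hj' | hj'
    · exact hA ⟨i, by omega⟩ ⟨j, by omega⟩ ⟨j', hj'⟩ hij hj
        ⟨(pw_glue_lt_pw_glue_iff_of_lt _ _).mp h1, (pw_glue_lt_pw_glue_iff_of_lt _ _).mp h2⟩
    · rw [pw_lt_pw_iff, show j' = ⟨n - #B, sub_card_lt_of_zero_mem h0⟩ from Fin.ext hj',
        glue_apply_sub_card h0] at h1
      exact Fin.not_lt_zero _ h1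
    · rw [pw_lt_pw_iff, glue_lt_glue_iff_of_le (by omega) (by omega), Fin.lt_def] at h2
      omega

lemma descents_glue (h0 : 0 ∈ B) (hB : #B < n) :
    descents (pw (glue B p')) = insert ⟨n - #B - 1, by omega⟩
      ((descents (pw p')).map (Fin.castLEEmb (Nat.sub_le n #B))) := by
  ext i
  simp only [mem_descents, mem_insert, mem_map, Fin.castLEEmb_apply, Fin.ext_iff, Fin.val_castLE]
  rcases lt_trichotomy (i : ℕ) (n - #B - 1) with hi | hi | hi
  · constructor
    · rintro ⟨j, hj, hji⟩
      exact Or.inr ⟨⟨i, by omega⟩, ⟨⟨j, by omega⟩, hj,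
        (pw_glue_lt_pw_glue_iff_of_lt _ _).mp hji⟩, rfl⟩
    · rintro (h | ⟨a, ⟨c, hc, hca⟩, ha⟩)
      · omega
      · obtain rfl : i = a.castLE (Nat.sub_le n #B) := Fin.ext ha.symm
        exact ⟨c.castLE (Nat.sub_le n #B), hc,
          (pw_glue_lt_pw_glue_iff_of_lt c.isLt a.isLt).mpr hca⟩
  · simp only [hi, true_or, iff_true]
    refine ⟨⟨n - #B, sub_card_lt_of_zero_mem h0⟩, by simp only; omega, ?_⟩
    rw [pw_lt_pw_iff, glue_apply_sub_card h0, Fin.pos_iff_ne_zero]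
    intro hzero
    have := glue_mem_iff.mp (hzero ▸ h0 : glue B p' i ∈ B)
    omega
  · refine iff_of_false (fun ⟨j, hj, hji⟩ => ?_) fun h => ?_
    · rw [pw_lt_pw_iff, glue_lt_glue_iff_of_le (by omega) (by omega), Fin.lt_def] at hji
      omega
    · obtain h | ⟨a, -, ha⟩ := h
      · omega
      · have := a.isLt
        omega

lemma desW_glue (h0 : 0 ∈ B) (hB : #B < n) : desW (pw (glue B p')) = desW (pw p') + 1 := by
  rw [desW_eq_card_descents, descents_glue h0 hB, card_insert_of_notMem, card_map,
    desW_eq_card_descents]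
  simp only [mem_map, mem_descents, Fin.castLEEmb_apply, not_exists, not_and]
  rintro a ⟨c, hc, -⟩ ha
  have := congrArg Fin.val ha
  simp only [Fin.val_castLE] at this
  omega

lemma glue_of_mem_occ213 (h0 : 0 ∈ B) {q : Fin n × Fin n} (hq : q ∈ occ213 (pw (glue B p')))
    (hq2 : n - #B ≤ (q.2 : ℕ) + 1) :
    (q.1 : ℕ) < n - #B ∧ n - #B ≤ q.2 ∧ ∃ j' : Fin n, (j' : ℕ) = q.2 + 1 ∧
      glue B p' q.2 < glue B p' q.1 ∧ glue B p' q.1 < glue B p' j' := by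
  obtain ⟨hlt, j', hj', h1, h2⟩ := mem_occ213.mp hq
  rw [pw_lt_pw_iff] at h1 h2
  have hq2' : n - #B ≤ q.2 := by
    by_contra h
    rw [show j' = ⟨n - #B, sub_card_lt_of_zero_mem h0⟩ from Fin.ext (by simp only; omega),
      glue_apply_sub_card h0] at h2
    exact Fin.not_lt_zero _ h2
  have hq1 : (q.1 : ℕ) < n - #B := by
    by_contra h
    rw [glue_lt_glue_iff_of_le hq2' (by omega)] at h1
    exact lt_asymm h1 hlt
  exact ⟨hq1, hq2', j', hj', h1, h2⟩

lemma snd_le_of_mem_occ213_glue (h0 : 0 ∈ B) {q r : Fin n × Fin n}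
    (hq : q ∈ occ213 (pw (glue B p'))) (hq2 : n - #B ≤ (q.2 : ℕ) + 1)
    (hr : r ∈ occ213 (pw (glue B p'))) (hr2 : n - #B ≤ (r.2 : ℕ) + 1)
    (h : glue B p' q.1 = glue B p' r.1) : q.2 ≤ r.2 := by
  obtain ⟨-, hq2', -, -, hq1, -⟩ := glue_of_mem_occ213 h0 hq hq2
  obtain ⟨-, hr2', j', hj', -, hr1⟩ := glue_of_mem_occ213 h0 hr hr2
  by_contra hlt
  have := (glue_le_glue_iff_of_le (p' := p') (by omega) hq2').mpr
    (Fin.le_def.mpr (by have := Fin.lt_def.mp (not_le.mp hlt); omega) : j' ≤ q.2)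
  exact lt_irrefl _ (((hq1.trans_eq h).trans hr1).trans_le this)

-- The position of the largest letter of `B` below `c` is the only possible `j`.
lemma exists_mem_occ213_glue (h0 : 0 ∈ B) {c : Fin n} (hcB : c ∉ B)
    (hcM : c < B.max' ⟨0, h0⟩) :
    ∃ q ∈ occ213 (pw (glue B p')), n - #B ≤ (q.2 : ℕ) + 1 ∧ glue B p' q.1 = c := by
  obtain ⟨ℓ, hℓB, hℓmax⟩ : ∃ ℓ ∈ {b ∈ B | b < c}, ∀ b ∈ B, b < c → b ≤ ℓ := by
    have hL : ({b ∈ B | b < c}).Nonempty :=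
      ⟨0, mem_filter.mpr ⟨h0, Fin.pos_iff_ne_zero.mpr fun h => hcB (h ▸ h0)⟩⟩
    exact ⟨_, max'_mem _ hL, fun b hb hbc => le_max' _ b (mem_filter.mpr ⟨hb, hbc⟩)⟩
  rw [mem_filter] at hℓB
  obtain ⟨hℓB, hℓc⟩ := hℓB
  obtain ⟨i, rfl⟩ := (glue B p').surjective c
  obtain ⟨j, rfl⟩ := (glue B p').surjective ℓ
  obtain ⟨m, hm⟩ := (glue B p').surjective (B.max' ⟨0, h0⟩)
  have hi := not_le.mp (mt glue_mem_iff.mpr hcB)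
  have hj := glue_mem_iff.mp hℓB
  have hm' : n - #B ≤ m := glue_mem_iff.mp (hm ▸ max'_mem _ _)
  have hjm := Fin.lt_def.mp <| (glue_lt_glue_iff_of_le hj hm').mp (hm ▸ hℓc.trans hcM)
  have hj1 : (j : ℕ) + 1 < n := by omega
  have hj1B : glue B p' ⟨j + 1, hj1⟩ ∈ B := glue_mem_iff.mpr (by simp only; omega)
  have hj1c : glue B p' i < glue B p' ⟨j + 1, hj1⟩ := by
    refine lt_of_le_of_ne (not_lt.mp fun h => ?_) fun h => hcB (h ▸ hj1B)
    have := (glue_le_glue_iff_of_le (by simp only; omega) hj).mp (hℓmax _ hj1B h)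
    exact absurd (Fin.le_def.mp this) (by simp only; omega)
  refine ⟨(i, j), ?_, Nat.le_succ_of_le hj, rfl⟩
  simp only [mem_occ213, pw_lt_pw_iff]
  exact ⟨Fin.lt_def.mpr (by omega), ⟨j + 1, hj1⟩, rfl, hℓc, hj1c⟩

lemma card_occ213_glue_of_le (h0 : 0 ∈ B) :
    #{q ∈ occ213 (pw (glue B p')) | ¬ (q.2 : ℕ) + 1 < n - #B} = B.sup Fin.val + 1 - #B := by
  rw [← card_compl_filter_lt_max' B ⟨0, h0⟩]
  refine card_nbij (fun q => glue B p' q.1) (fun q hq => ?_) (fun q hq r hr h => ?_)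
    (fun c hc => ?_)
  · rw [mem_coe, mem_filter, not_lt] at hq
    obtain ⟨hq1, -, j', hj', -, h2⟩ := glue_of_mem_occ213 h0 hq.1 hq.2
    rw [mem_coe, mem_filter, mem_compl, glue_mem_iff, not_le]
    exact ⟨hq1, h2.trans_le (le_max' B _ (glue_mem_iff.mpr (by omega)))⟩
  · simp only [mem_coe, mem_filter, not_lt] at hq hr
    exact Prod.ext ((glue B p').injective h) (le_antisymm
      (snd_le_of_mem_occ213_glue h0 hq.1 hq.2 hr.1 hr.2 h)
      (snd_le_of_mem_occ213_glue h0 hr.1 hr.2 hq.1 hq.2 h.symm))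
  · rw [mem_coe, mem_filter, mem_compl] at hc
    obtain ⟨q, hq, hq2, rfl⟩ := exists_mem_occ213_glue (p' := p') h0 hc.1 hc.2
    exact ⟨q, mem_filter.mpr ⟨hq, not_lt.mpr hq2⟩, rfl⟩

lemma pat2_13_glue (h0 : 0 ∈ B) :
    pat2_13 (pw (glue B p')) = pat2_13 (pw p') + (B.sup Fin.val + 1 - #B) := by
  rw [pat2_13_eq_card_occ213, pat2_13_eq_card_occ213,
    ← card_filter_add_card_filter_not (fun q : Fin n × Fin n => (q.2 : ℕ) + 1 < n - #B),
    card_occ213_glue_of_lt, card_occ213_glue_of_le h0]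

lemma Avoids132.exists_glue_eq {p : Perm (Fin n)} (hA : Avoids132 (pw p)) :
    ∃ p', glue (minSuffix p) p' = p := by
  have hs : n - #(minSuffix p) = p.symm 0 := by
    have := (p.symm 0).isLt
    rw [card_minSuffix]
    omega
  have hmem : ∀ i, p i ∈ minSuffix p ↔ p.symm 0 ≤ i := by simp [minSuffix]
  have hpre (a : Fin (n - #(minSuffix p))) :
      p (a.castLE (Nat.sub_le _ _)) ∈ (minSuffix p)ᶜ := by
    rw [mem_compl, hmem, Fin.le_def, Fin.val_castLE, not_le]
    exact hs ▸ a.isLt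
  let e := (minSuffix p)ᶜ.orderIsoOfFin (card_compl_fin _)
  let f (a : Fin (n - #(minSuffix p))) := e.symm ⟨_, hpre a⟩
  have hf : f.Injective := fun a b h =>
    Fin.castLE_injective _ (p.injective (Subtype.ext_iff.mp (e.symm.injective h)))
  refine ⟨Equiv.ofBijective f (Finite.injective_iff_bijective.mp hf), Equiv.ext fun i => ?_⟩
  by_cases hi : (i : ℕ) < n - #(minSuffix p)
  · rw [glue_apply_of_lt hi, ← coe_orderIsoOfFin_apply]
    simp [f, e]
  · have hcard := card_finset_fin_le (minSuffix p)
    have hmono : StrictMono fun t : Fin #(minSuffix p) =>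
        p ⟨n - #(minSuffix p) + t, by have := t.isLt; omega⟩ :=
      fun t u htu => hA.lt_of_symm_zero_le_of_lt (by simp [Fin.le_def]; omega)
        (Fin.mk_lt_mk.mpr (by simpa using htu))
    have := orderEmbOfFin_unique rfl (fun t => (hmem _).mpr (by simp [Fin.le_def]; omega)) hmono
    rw [glue_apply_of_le (not_lt.mp hi), ← this]
    exact congrArg p (Fin.ext (by simp only; omega))

end Glue

open scoped Classical in
noncomputable def avoiderPatSum (n d : ℕ) : ℚ[X] :=
  ∑ p : Perm (Fin n) with Avoids132 (pw p) ∧ desW (pw p) = d, X ^ pat2_13 (pw p)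

open scoped Classical in
lemma avoiderPatSum_zero (n : ℕ) : avoiderPatSum n 0 = 1 := by
  have : ({p : Perm (Fin n) | Avoids132 (pw p) ∧ desW (pw p) = 0} : Finset _) = {1} := by
    ext p
    simp only [mem_filter, mem_univ, true_and, mem_singleton]
    exact ⟨fun h => eq_one_of_desW_eq_zero h.2,
      fun h => h ▸ ⟨avoids132_pw_one, desW_pw_one⟩⟩
  rw [avoiderPatSum, this, sum_singleton, pat2_13_pw_one, pow_zero]

open scoped Classical in
lemma sum_minSuffix_eq [NeZero n] {B : Finset (Fin n)} (h0 : 0 ∈ B) (hB : #B < n) (d : ℕ) :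
    ∑ p : Perm (Fin n) with (Avoids132 (pw p) ∧ desW (pw p) = d + 1) ∧ minSuffix p = B,
      X ^ pat2_13 (pw p) = X ^ (B.sup Fin.val + 1 - #B) * avoiderPatSum (n - #B) d := by
  rw [avoiderPatSum, mul_sum]
  symm
  refine sum_bij (fun p' _ => glue B p') (fun p' hp' => ?_)
    (fun p' _ q' _ h => glue_injective h) (fun p hp => ?_) (fun p' _ => ?_)
  · simp only [mem_filter, mem_univ, true_and] at hp' ⊢
    rw [avoids132_glue_iff h0, desW_glue h0 hB, hp'.2, minSuffix_glue h0]
    exact ⟨⟨hp'.1, rfl⟩, rfl⟩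
  · simp only [mem_filter, mem_univ, true_and] at hp
    obtain ⟨⟨hA, hdes⟩, rfl⟩ := hp
    obtain ⟨p', hp'⟩ := hA.exists_glue_eq
    refine ⟨p', ?_, hp'⟩
    rw [mem_filter, ← avoids132_glue_iff h0, ← Nat.add_right_cancel_iff, ← desW_glue h0 hB,
      hp']
    exact ⟨mem_univ _, hA, hdes⟩
  · rw [pat2_13_glue h0, pow_add, mul_comm]

open scoped Classical in
lemma avoiderPatSum_succ (n d : ℕ) [NeZero n] :
    avoiderPatSum n (d + 1) = ∑ B : Finset (Fin n) with 0 ∈ B ∧ #B < n,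
      X ^ (B.sup Fin.val + 1 - #B) * avoiderPatSum (n - #B) d := by
  rw [avoiderPatSum, ← sum_fiberwise_of_maps_to (g := minSuffix) fun p hp => ?_]
  · refine sum_congr rfl fun B hB => ?_
    rw [mem_filter] at hB
    rw [filter_filter, sum_minSuffix_eq hB.2.1 hB.2.2]
  · simp only [mem_filter, mem_univ, true_and] at hp ⊢
    refine ⟨by simp [minSuffix], ?_⟩
    rw [card_minSuffix]
    have : (p.symm 0 : ℕ) ≠ 0 := fun h =>
      by simp [hp.1.eq_one_of_symm_zero_eq_zero (Fin.ext h), desW_pw_one] at hp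
    omega

theorem avoiderPatSum_eq_Sqt (m d : ℕ) : avoiderPatSum (m + 1) d = Sqt (m + 1) (d + 1) := by
  induction d generalizing m with
  | zero => rw [avoiderPatSum_zero, Sqt_succ_one]
  | succ d ih =>
    have hvanish : ∀ B ∈ ({B | 0 ∈ B} : Finset (Finset (Fin (m + 1)))),
        X ^ (B.sup Fin.val + 1 - #B) * Sqt (m + 1 - #B) (d + 1) ≠ 0 → #B < m + 1 := by
      intro B _ hne
      by_contra hle
      rw [show m + 1 - #B = 0 by omega, Sqt_eq_zero_of_lt (Nat.succ_pos d), mul_zero] at hne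
      exact hne rfl
    rw [avoiderPatSum_succ, ← sum_zero_mem_pow_sup_mul_Sqt, ← sum_filter_of_ne hvanish,
      filter_filter]
    refine sum_congr rfl fun B hB => ?_
    obtain ⟨k, hk⟩ : ∃ k, m + 1 - #B = k + 1 := ⟨m - #B, by rw [mem_filter] at hB; omega⟩
    rw [hk, ih]

open scoped Classical in
/-- The sum of q^{(2-13)(σ)} over 1-32-avoiding permutations of [n] with k−1 descents is S̃_q(n,k). -/
theorem stmt13 (n k : ℕ) (hk : 1 ≤ k) (hn : k ≤ n) :
    ∑ p ∈ (Finset.univ : Finset (Equiv.Perm (Fin n))).filter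
        (fun p => Avoids132 (pw p) ∧ desW (pw p) = k - 1),
      (Polynomial.X : Polynomial ℚ) ^ pat2_13 (pw p) = Sqt n k := by
  obtain ⟨m, rfl⟩ : ∃ m, n = m + 1 := ⟨n - 1, by omega⟩
  obtain ⟨d, rfl⟩ : ∃ d, k = d + 1 := ⟨k - 1, by omega⟩
  exact avoiderPatSum_eq_Sqt m d
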